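/- Let m ∈ ℝ, σ > 0, r > 0, x > 0, S > 0 and set q := √(m² + 2rσ²). Then ∫_0^S e^{−ru}·(1 − π(u,x)) du = (1/r)·[1 − e^{−rS}·(1 − π(S,x))] − (1/r)·[ exp(−x(m+q)/σ²)·(1 − Φ((x − qS)/(σ√S))) + exp(−x(m−q)/σ²)·(1 − Φ((x + qS)/(σ√S))) ]. -/

import Mathlib

/-!
Call the right-hand side `F(S)`. It tends to `0` as `S → 0⁺` and `F'(S) = e^{-rS}(1 - π(S,x))`,
so the formula is the fundamental theorem of calculus on `(0, S]` (the integrand is bounded).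
The derivative computation rests on two Gaussian identities: the reflection identity
`e^{-2mx/σ²} φ((-x+mu)/(σ√u)) = φ((x+mu)/(σ√u))` turns `∂ₜπ` into the first-passage density
`x/(σ u √u) · φ((x+mu)/(σ√u))`, and completing the square with `q² = m² + 2rσ²` gives
`e^{-x(m±q)/σ²} φ((x∓qu)/(σ√u)) = e^{-ru} φ((x+mu)/(σ√u))`, so the second bracket has derivative
`e^{-ru}` times that density.
-/

open MeasureTheory Real Set

/-- The standard normal density. -/
noncomputable def phi (x : ℝ) : ℝ := (Real.sqrt (2 * Real.pi))⁻¹ * Real.exp (-x ^ 2 / 2)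

/-- The standard normal cumulative distribution function. -/
noncomputable def Phi (x : ℝ) : ℝ := ∫ u in Set.Iio x, phi u

/-- The first-passage probability `π(t,x)`. -/
noncomputable def piF (m σ t x : ℝ) : ℝ :=
  1 - Phi ((x + m * t) / (σ * Real.sqrt t)) +
    Real.exp (-2 * m * x / σ ^ 2) * Phi ((-x + m * t) / (σ * Real.sqrt t))

open Filter Topology ProbabilityTheory

lemma phi_eq_gaussianPDFReal : phi = gaussianPDFReal 0 1 := by
  ext x
  simp [phi, gaussianPDFReal]

lemma continuous_phi : Continuous phi := by
  unfold phi
  fun_prop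

lemma Phi_eq_cdf_gaussianReal : Phi = cdf (gaussianReal 0 1) := by
  ext x
  rw [cdf_eq_real, measureReal_def, gaussianReal_apply_eq_integral _ one_ne_zero,
    ENNReal.toReal_ofReal
      (setIntegral_nonneg measurableSet_Iic fun y _ => gaussianPDFReal_nonneg _ _ y),
    Phi, phi_eq_gaussianPDFReal]
  exact setIntegral_congr_set Iio_ae_eq_Iic

lemma Phi_nonneg (x : ℝ) : 0 ≤ Phi x := Phi_eq_cdf_gaussianReal ▸ cdf_nonneg _ x

lemma Phi_le_one (x : ℝ) : Phi x ≤ 1 := Phi_eq_cdf_gaussianReal ▸ cdf_le_one _ x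

lemma tendsto_Phi_atTop : Tendsto Phi atTop (𝓝 1) :=
  Phi_eq_cdf_gaussianReal ▸ tendsto_cdf_atTop _

lemma tendsto_Phi_atBot : Tendsto Phi atBot (𝓝 0) :=
  Phi_eq_cdf_gaussianReal ▸ tendsto_cdf_atBot _

lemma hasDerivAt_Phi (x : ℝ) : HasDerivAt Phi (phi x) x := by
  have hint : Integrable phi := phi_eq_gaussianPDFReal ▸ integrable_gaussianPDFReal 0 1
  have hPhi : ∀ y, Phi y = Phi 0 + ∫ u in (0:ℝ)..y, phi u := fun y => by
    rw [← intervalIntegral.integral_Iic_sub_Iic hint.integrableOn hint.integrableOn, Phi, Phi,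
      setIntegral_congr_set Iio_ae_eq_Iic, setIntegral_congr_set Iio_ae_eq_Iic]
    ring
  refine HasDerivAt.congr_of_eventuallyEq ?_ (Eventually.of_forall hPhi)
  exact (intervalIntegral.integral_hasDerivAt_right hint.intervalIntegrable
    continuous_phi.aestronglyMeasurable.stronglyMeasurableAtFilter
    continuous_phi.continuousAt).const_add _

lemma continuous_Phi : Continuous Phi :=
  continuous_iff_continuousAt.2 fun x => (hasDerivAt_Phi x).continuousAt

section AffineDivSqrt

variable {σ c d u : ℝ}

lemma hasDerivAt_affine_div_sqrt (hσ : σ ≠ 0) (hu : 0 < u) :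
    HasDerivAt (fun t => (c + d * t) / (σ * √t)) ((d * u - c) / (2 * σ * u * √u)) u := by
  have hnum : HasDerivAt (fun t => c + d * t) d u := by
    simpa using ((hasDerivAt_id u).const_mul d).const_add c
  have hden : HasDerivAt (fun t => σ * √t) (σ * (1 / (2 * √u))) u :=
    (hasDerivAt_sqrt hu.ne').const_mul σ
  refine (hnum.div hden (by positivity)).congr_deriv ?_
  field_simp
  ring_nf
  rw [sq_sqrt hu.le]
  ring

lemma tendsto_inv_mul_sqrt_nhdsGT_zero (hσ : 0 < σ) :
    Tendsto (fun t => (σ * √t)⁻¹) (𝓝[>] 0) atTop := by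
  refine Tendsto.inv_tendsto_nhdsGT_zero (tendsto_nhdsWithin_iff.2 ⟨?_, ?_⟩)
  · simpa using ((continuous_sqrt.tendsto 0).const_mul σ).mono_left nhdsWithin_le_nhds
  · filter_upwards [self_mem_nhdsWithin] with t ht
    exact mul_pos hσ (sqrt_pos.2 ht)

lemma tendsto_affine_nhdsGT_zero : Tendsto (fun t => c + d * t) (𝓝[>] 0) (𝓝 c) := by
  have hcont : Continuous fun t : ℝ => c + d * t := by fun_prop
  simpa using (hcont.tendsto 0).mono_left nhdsWithin_le_nhds

lemma tendsto_affine_div_sqrt_atTop (hσ : 0 < σ) (hc : 0 < c) :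
    Tendsto (fun t => (c + d * t) / (σ * √t)) (𝓝[>] 0) atTop := by
  simpa only [div_eq_mul_inv] using
    tendsto_affine_nhdsGT_zero.pos_mul_atTop hc (tendsto_inv_mul_sqrt_nhdsGT_zero hσ)

lemma tendsto_affine_div_sqrt_atBot (hσ : 0 < σ) (hc : c < 0) :
    Tendsto (fun t => (c + d * t) / (σ * √t)) (𝓝[>] 0) atBot := by
  simpa only [div_eq_mul_inv] using
    tendsto_affine_nhdsGT_zero.neg_mul_atTop hc (tendsto_inv_mul_sqrt_nhdsGT_zero hσ)

lemma hasDerivAt_Phi_affine_div_sqrt (hσ : σ ≠ 0) (hu : 0 < u) :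
    HasDerivAt (fun t => Phi ((c + d * t) / (σ * √t)))
      (phi ((c + d * u) / (σ * √u)) * ((d * u - c) / (2 * σ * u * √u))) u :=
  (hasDerivAt_Phi _).comp u (hasDerivAt_affine_div_sqrt hσ hu)

end AffineDivSqrt

section FirstPassage

variable {m σ r x q u : ℝ}

lemma exp_mul_phi_reflect (hσ : σ ≠ 0) (hu : 0 < u) :
    exp (-2 * m * x / σ ^ 2) * phi ((-x + m * u) / (σ * √u)) = phi ((x + m * u) / (σ * √u)) := by
  unfold phi
  rw [mul_left_comm, ← exp_add]
  congr 2
  obtain ⟨s, hs, rfl⟩ : ∃ s, 0 < s ∧ u = s ^ 2 := ⟨√u, sqrt_pos.2 hu, (sq_sqrt hu.le).symm⟩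
  rw [sqrt_sq hs.le]
  field_simp
  ring

lemma exp_mul_phi_of_sq_eq (hσ : σ ≠ 0) (hq : q ^ 2 = m ^ 2 + 2 * r * σ ^ 2) (hu : 0 < u) :
    exp (-x * (m + q) / σ ^ 2) * phi ((x - q * u) / (σ * √u))
      = exp (-r * u) * phi ((x + m * u) / (σ * √u)) := by
  unfold phi
  rw [mul_left_comm, ← exp_add, mul_left_comm, ← exp_add]
  congr 2
  obtain ⟨s, hs, rfl⟩ : ∃ s, 0 < s ∧ u = s ^ 2 := ⟨√u, sqrt_pos.2 hu, (sq_sqrt hu.le).symm⟩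
  rw [sqrt_sq hs.le]
  field_simp
  linear_combination (-s ^ 4) * hq

lemma hasDerivAt_piF (hσ : σ ≠ 0) (hu : 0 < u) :
    HasDerivAt (fun t => piF m σ t x) (x / (σ * u * √u) * phi ((x + m * u) / (σ * √u))) u := by
  have hA := hasDerivAt_Phi_affine_div_sqrt (c := x) (d := m) hσ hu
  have hB := hasDerivAt_Phi_affine_div_sqrt (c := -x) (d := m) hσ hu
  refine (((hasDerivAt_const u 1).sub hA).add
    (hB.const_mul (exp (-2 * m * x / σ ^ 2)))).congr_deriv ?_
  rw [← mul_assoc, exp_mul_phi_reflect hσ hu]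
  field_simp
  ring

lemma tendsto_piF_nhdsGT_zero (hσ : 0 < σ) (hx : 0 < x) :
    Tendsto (fun t => piF m σ t x) (𝓝[>] 0) (𝓝 0) := by
  have hA := tendsto_Phi_atTop.comp (tendsto_affine_div_sqrt_atTop (d := m) hσ hx)
  have hB := tendsto_Phi_atBot.comp (tendsto_affine_div_sqrt_atBot (d := m) hσ (neg_neg_of_pos hx))
  have h := ((tendsto_const_nhds (x := (1:ℝ))).sub hA).add
    (hB.const_mul (exp (-2 * m * x / σ ^ 2)))
  rwa [sub_self, mul_zero, add_zero] at h

lemma abs_one_sub_piF_le (t : ℝ) : |1 - piF m σ t x| ≤ 1 + exp (-2 * m * x / σ ^ 2) := by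
  have hA := Phi_nonneg ((x + m * t) / (σ * √t))
  have hA' := Phi_le_one ((x + m * t) / (σ * √t))
  have hB := Phi_nonneg ((-x + m * t) / (σ * √t))
  have hB' := Phi_le_one ((-x + m * t) / (σ * √t))
  have hc := exp_pos (-2 * m * x / σ ^ 2)
  rw [piF, abs_le]
  constructor <;> nlinarith

lemma measurable_piF : Measurable fun t => piF m σ t x := by
  unfold piF
  have hPhi := continuous_Phi.measurable
  fun_prop

end FirstPassage

section Laplace

variable {m σ r x q u : ℝ}

/-- `E[e^{-rτ}; τ ≤ t]` for the first time `τ` at which the drifted Brownian motion started at `x`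
hits `0`, when `q = √(m² + 2rσ²)`. -/
noncomputable def hittingLaplace (m σ x q t : ℝ) : ℝ :=
  exp (-x * (m + q) / σ ^ 2) * (1 - Phi ((x - q * t) / (σ * √t)))
    + exp (-x * (m - q) / σ ^ 2) * (1 - Phi ((x + q * t) / (σ * √t)))

lemma hasDerivAt_hittingLaplace (hσ : σ ≠ 0) (hq : q ^ 2 = m ^ 2 + 2 * r * σ ^ 2) (hu : 0 < u) :
    HasDerivAt (hittingLaplace m σ x q)
      (exp (-r * u) * (x / (σ * u * √u) * phi ((x + m * u) / (σ * √u)))) u := by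
  have hα : HasDerivAt (fun t => Phi ((x - q * t) / (σ * √t)))
      (phi ((x - q * u) / (σ * √u)) * ((-q * u - x) / (2 * σ * u * √u))) u := by
    simpa only [neg_mul, ← sub_eq_add_neg] using
      hasDerivAt_Phi_affine_div_sqrt (c := x) (d := -q) hσ hu
  have hβ := hasDerivAt_Phi_affine_div_sqrt (c := x) (d := q) hσ hu
  have hplus := exp_mul_phi_of_sq_eq (x := x) hσ hq hu
  have hminus :=
    exp_mul_phi_of_sq_eq (m := m) (r := r) (x := x) (q := -q) hσ (by rwa [neg_sq]) hu
  rw [← sub_eq_add_neg, neg_mul q, sub_neg_eq_add] at hminus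
  refine ((((hasDerivAt_const u 1).sub hα).const_mul (exp (-x * (m + q) / σ ^ 2))).add
    (((hasDerivAt_const u 1).sub hβ).const_mul (exp (-x * (m - q) / σ ^ 2)))).congr_deriv ?_
  linear_combination ((q * u + x) / (2 * σ * u * √u)) * hplus
    - ((q * u - x) / (2 * σ * u * √u)) * hminus

lemma tendsto_hittingLaplace_nhdsGT_zero (hσ : 0 < σ) (hx : 0 < x) :
    Tendsto (hittingLaplace m σ x q) (𝓝[>] 0) (𝓝 0) := by
  have hα : Tendsto (fun t => Phi ((x - q * t) / (σ * √t))) (𝓝[>] 0) (𝓝 1) := by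
    simpa only [Function.comp_def, neg_mul, ← sub_eq_add_neg] using
      tendsto_Phi_atTop.comp (tendsto_affine_div_sqrt_atTop (d := -q) hσ hx)
  have hβ := tendsto_Phi_atTop.comp (tendsto_affine_div_sqrt_atTop (d := q) hσ hx)
  have h :=
    (((tendsto_const_nhds (x := (1:ℝ))).sub hα).const_mul (exp (-x * (m + q) / σ ^ 2))).add
      (((tendsto_const_nhds (x := (1:ℝ))).sub hβ).const_mul (exp (-x * (m - q) / σ ^ 2)))
  rwa [sub_self, mul_zero, mul_zero, add_zero] at h

end Laplace

section DiscountedSurvival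

variable {m σ r x q u : ℝ}

lemma intervalIntegrable_exp_mul_one_sub_piF (a b : ℝ) :
    IntervalIntegrable (fun t => exp (-r * t) * (1 - piF m σ t x)) volume a b := by
  rw [intervalIntegrable_iff]
  refine Integrable.mul_bdd (c := 1 + exp (-2 * m * x / σ ^ 2)) ?_ ?_ ?_
  · have hexp : Continuous fun t => exp (-r * t) := by fun_prop
    exact hexp.integrableOn_uIcc.mono_set uIoc_subset_uIcc
  · exact (measurable_const.sub measurable_piF).aestronglyMeasurable
  · exact ae_of_all _ fun t => abs_one_sub_piF_le t

noncomputable def discountedSurvivalPrimitive (m σ r x q t : ℝ) : ℝ :=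
  1 / r * (1 - exp (-r * t) * (1 - piF m σ t x)) - 1 / r * hittingLaplace m σ x q t

lemma hasDerivAt_discountedSurvivalPrimitive (hσ : σ ≠ 0) (hr : r ≠ 0)
    (hq : q ^ 2 = m ^ 2 + 2 * r * σ ^ 2) (hu : 0 < u) :
    HasDerivAt (discountedSurvivalPrimitive m σ r x q) (exp (-r * u) * (1 - piF m σ u x)) u := by
  have hexp : HasDerivAt (fun t => exp (-r * t)) (exp (-r * u) * -r) u := by
    simpa using ((hasDerivAt_id u).const_mul (-r)).exp
  have hsurv := ((hasDerivAt_piF (m := m) (x := x) hσ hu).const_sub 1)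
  have h := ((hexp.mul hsurv).const_sub 1).const_mul (1 / r) |>.sub
    ((hasDerivAt_hittingLaplace (x := x) hσ hq hu).const_mul (1 / r))
  refine h.congr_deriv ?_
  field_simp
  ring

lemma tendsto_discountedSurvivalPrimitive_nhdsGT_zero (hσ : 0 < σ) (hx : 0 < x) :
    Tendsto (discountedSurvivalPrimitive m σ r x q) (𝓝[>] 0) (𝓝 0) := by
  have hexp : Tendsto (fun t => exp (-r * t)) (𝓝[>] 0) (𝓝 1) := by
    have hcont : Continuous fun t => exp (-r * t) := by fun_prop
    simpa using (hcont.tendsto 0).mono_left nhdsWithin_le_nhds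
  unfold discountedSurvivalPrimitive
  convert ((tendsto_const_nhds.sub (hexp.mul (tendsto_const_nhds.sub
    (tendsto_piF_nhdsGT_zero hσ hx)))).const_mul _).sub
    ((tendsto_hittingLaplace_nhdsGT_zero hσ hx).const_mul _) using 2
  simp

end DiscountedSurvival

/-- Let `m ∈ ℝ`, `σ > 0`, `r > 0`, `x > 0`, `S > 0` and set `q := √(m² + 2rσ²)`. Then
`∫_0^S e^{−ru}·(1 − π(u,x)) du = (1/r)·[1 − e^{−rS}·(1 − π(S,x))]
 − (1/r)·[exp(−x(m+q)/σ²)·(1 − Φ((x − qS)/(σ√S))) + exp(−x(m−q)/σ²)·(1 − Φ((x + qS)/(σ√S)))]`. -/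
theorem stmt_5 (m σ r x S : ℝ) (hσ : 0 < σ) (hr : 0 < r) (hx : 0 < x) (hS : 0 < S)
    (q : ℝ) (hq : q = Real.sqrt (m ^ 2 + 2 * r * σ ^ 2)) :
    (∫ u in (0:ℝ)..S, Real.exp (-r * u) * (1 - piF m σ u x))
      = (1 / r) * (1 - Real.exp (-r * S) * (1 - piF m σ S x))
        - (1 / r) *
          (Real.exp (-x * (m + q) / σ ^ 2) * (1 - Phi ((x - q * S) / (σ * Real.sqrt S)))
            + Real.exp (-x * (m - q) / σ ^ 2) * (1 - Phi ((x + q * S) / (σ * Real.sqrt S)))) := by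
  have hq2 : q ^ 2 = m ^ 2 + 2 * r * σ ^ 2 := hq ▸ sq_sqrt (by positivity)
  have hderiv (u : ℝ) (hu : 0 < u) :=
    hasDerivAt_discountedSurvivalPrimitive (x := x) hσ.ne' hr.ne' hq2 hu
  rw [intervalIntegral.integral_eq_sub_of_hasDerivAt_of_tendsto hS (fun u hu => hderiv u hu.1)
    (intervalIntegrable_exp_mul_one_sub_piF 0 S)
    (tendsto_discountedSurvivalPrimitive_nhdsGT_zero hσ hx)
    (hderiv S hS).continuousAt.continuousWithinAt, sub_zero]
  rfl
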